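/- arXiv:2209.15278 — 2 statements merged into one kernel-verified Lean document; each statement's English description precedes it below -/
import Mathlib

section
/- Let E be a real inner product space, y ∈ E, 0 < δ ≤ 1, Z ≥ 0, and L a natural number. Let x : ℕ → E and z : ℕ → E satisfy, for every l with 1 ≤ l ≤ L: x_l = x_{l−1} + z_l, ‖z_l‖² ≤ Z², ⟪x_{l−1} − y, z_l⟫ ≤ −δ·‖x_{l−1} − y‖², and additionally ‖x_{l−1} − y‖² ≥ Z²/δ. Then ‖x_L − y‖² ≤ (1 − δ)^L · ‖x_0 − y‖². -/
open RealInnerProductSpace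

/-- Geometric-decay branch of the proof of Lemma 3: while the squared distance
stays above the noise floor `Z²/δ`, it decreases by a factor `1 − δ` at every node. -/
theorem markov_chain_geometric_decay
    {E : Type*} [NormedAddCommGroup E] [InnerProductSpace ℝ E]
    (y : E) (δ Z : ℝ) (hδ0 : 0 < δ) (hδ1 : δ ≤ 1) (hZ : 0 ≤ Z)
    (L : ℕ) (x z : ℕ → E)
    (hstep : ∀ l, 1 ≤ l → l ≤ L → x l = x (l - 1) + z l)
    (hz : ∀ l, 1 ≤ l → l ≤ L → ‖z l‖ ^ 2 ≤ Z ^ 2)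
    (hconvex : ∀ l, 1 ≤ l → l ≤ L → ⟪x (l - 1) - y, z l⟫ ≤ -δ * ‖x (l - 1) - y‖ ^ 2)
    (hfloor : ∀ l, 1 ≤ l → l ≤ L → ‖x (l - 1) - y‖ ^ 2 ≥ Z ^ 2 / δ) :
    ‖x L - y‖ ^ 2 ≤ (1 - δ) ^ L * ‖x 0 - y‖ ^ 2 := by
  have key : ∀ n, n ≤ L → ‖x n - y‖ ^ 2 ≤ (1 - δ) ^ n * ‖x 0 - y‖ ^ 2 := by
    intro n
    induction n with
    | zero => intro _; simp
    | succ k ih =>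
      intro hkL
      have hk : k ≤ L := Nat.le_of_succ_le hkL
      have h1 : 1 ≤ k + 1 := Nat.le_add_left 1 k
      have hs := hstep (k + 1) h1 hkL
      have hzz := hz (k + 1) h1 hkL
      have hc := hconvex (k + 1) h1 hkL
      have hf := hfloor (k + 1) h1 hkL
      simp only [Nat.add_sub_cancel] at hs hc hf
      have hZ2 : Z ^ 2 ≤ δ * ‖x k - y‖ ^ 2 := by
        rw [ge_iff_le, div_le_iff₀ hδ0] at hf
        linarith
      have hstep2 : ‖x (k + 1) - y‖ ^ 2 ≤ (1 - δ) * ‖x k - y‖ ^ 2 := by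
        have hexp : x (k + 1) - y = (x k - y) + z (k + 1) := by
          rw [hs]; abel
        rw [hexp, norm_add_sq_real]
        nlinarith
      calc ‖x (k + 1) - y‖ ^ 2 ≤ (1 - δ) * ‖x k - y‖ ^ 2 := hstep2
        _ ≤ (1 - δ) * ((1 - δ) ^ k * ‖x 0 - y‖ ^ 2) := by
            apply mul_le_mul_of_nonneg_left (ih hk) (by linarith)
        _ = (1 - δ) ^ (k + 1) * ‖x 0 - y‖ ^ 2 := by ring
  exact key L le_rfl
end

section
/- Let E be a real inner product space and y ∈ E. Let a > 0, Z > 0, D ≥ 0 be real numbers, L ≥ 2 a natural number, and set δ := (1 + a)·(log L)/L; assume δ ≤ 1 and the chain-length condition L^a · log L ≥ D²·δ²/((1 + a)·Z²). Let x : ℕ → E and z : ℕ → E satisfy, for every l with 1 ≤ l ≤ L: x_l = x_{l−1} + z_l, ‖z_l‖² ≤ Z², and ⟪x_{l−1} − y, z_l⟫ ≤ −δ·‖x_{l−1} − y‖²; and assume ‖x_0 − y‖ ≤ D. Then ‖x_L − y‖² ≤ (1 + a)·(log L)·Z² / (δ²·L). -/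
open RealInnerProductSpace

/-- Deterministic, made-precise form of Lemma 3 (convergence guarantee): an input
carried along a δ-convex learnable Markov chain of length `L` with
`δ = (1 + a) log L / L` ends within squared distance `(1 + a)(log L)Z²/(δ²L)`
of the target. -/
theorem markov_chain_convergence_guarantee
    {E : Type*} [NormedAddCommGroup E] [InnerProductSpace ℝ E]
    (y : E) (a Z D : ℝ) (ha : 0 < a) (hZ : 0 < Z) (hD : 0 ≤ D)
    (L : ℕ) (hL : 2 ≤ L)
    (δ : ℝ) (hδdef : δ = (1 + a) * Real.log L / L) (hδ1 : δ ≤ 1)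
    (hlen : (L : ℝ) ^ a * Real.log L ≥ D ^ 2 * δ ^ 2 / ((1 + a) * Z ^ 2))
    (x z : ℕ → E)
    (hstep : ∀ l, 1 ≤ l → l ≤ L → x l = x (l - 1) + z l)
    (hz : ∀ l, 1 ≤ l → l ≤ L → ‖z l‖ ^ 2 ≤ Z ^ 2)
    (hconvex : ∀ l, 1 ≤ l → l ≤ L → ⟪x (l - 1) - y, z l⟫ ≤ -δ * ‖x (l - 1) - y‖ ^ 2)
    (hinit : ‖x 0 - y‖ ≤ D) :
    ‖x L - y‖ ^ 2 ≤ (1 + a) * Real.log L * Z ^ 2 / (δ ^ 2 * L) := by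
  have hL1 : (1 : ℝ) < L := by exact_mod_cast hL
  have hLpos : (0 : ℝ) < L := by linarith
  have hlog : 0 < Real.log L := Real.log_pos hL1
  have h1a : (0 : ℝ) < 1 + a := by linarith
  have hδpos : 0 < δ := by
    rw [hδdef]; positivity
  -- the RHS equals Z^2/δ
  have hRHS : (1 + a) * Real.log L * Z ^ 2 / (δ ^ 2 * L) = Z ^ 2 / δ := by
    rw [hδdef]
    field_simp
  rw [hRHS]
  have hδL : δ * L = (1 + a) * Real.log L := by
    rw [hδdef]; field_simp
  -- one-step inequality
  have key : ∀ l, 1 ≤ l → l ≤ L →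
      ‖x l - y‖ ^ 2 ≤ (1 - 2 * δ) * ‖x (l - 1) - y‖ ^ 2 + Z ^ 2 := by
    intro l h1 h2
    have hx : x l - y = (x (l - 1) - y) + z l := by
      rw [hstep l h1 h2]; abel
    rw [hx, norm_add_sq_real]
    have hc := hconvex l h1 h2
    have hzz := hz l h1 h2
    nlinarith [hc, hzz]
  by_cases hhalf : 2 * δ ≤ 1
  · -- contraction case
    obtain ⟨t, ht⟩ : ∃ t : ℝ, t = δ * L := ⟨_, rfl⟩
    have htpos : 0 < t := by rw [ht]; positivity
    -- induction bound
    have ind : ∀ l, l ≤ L → ‖x l - y‖ ^ 2 ≤ (1 - 2 * δ) ^ l * D ^ 2 + Z ^ 2 / (2 * δ) := by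
      intro l
      induction l with
      | zero =>
        intro _
        have : ‖x 0 - y‖ ^ 2 ≤ D ^ 2 := by nlinarith [norm_nonneg (x 0 - y)]
        have hpos : 0 ≤ Z ^ 2 / (2 * δ) := by positivity
        simpa using by linarith
      | succ n ih =>
        intro h
        have h1 : 1 ≤ n + 1 := Nat.le_add_left 1 n
        have hk := key (n + 1) h1 h
        simp only [Nat.add_sub_cancel] at hk
        have ihn := ih (le_trans (Nat.le_succ n) h)
        have hr0 : (0 : ℝ) ≤ 1 - 2 * δ := by linarith
        have hmul := mul_le_mul_of_nonneg_left ihn hr0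
        have hfld : 2 * δ * (Z ^ 2 / (2 * δ)) = Z ^ 2 := by
          field_simp
        have hrn : (0:ℝ) ≤ (1 - 2*δ) ^ n := pow_nonneg hr0 n
        calc ‖x (n+1) - y‖ ^ 2 ≤ (1 - 2*δ) * ‖x n - y‖ ^ 2 + Z ^ 2 := hk
          _ ≤ (1 - 2*δ) * ((1 - 2*δ) ^ n * D ^ 2 + Z ^ 2 / (2*δ)) + Z ^ 2 := by linarith
          _ = (1 - 2*δ) ^ (n+1) * D ^ 2 + Z ^ 2 / (2*δ) - (2*δ) * (Z^2/(2*δ)) + Z ^ 2 := by ring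
          _ = (1 - 2*δ) ^ (n+1) * D ^ 2 + Z ^ 2 / (2*δ) := by rw [hfld]; ring
    have hfinal := ind L le_rfl
    -- bound the geometric term
    have hr0 : (0 : ℝ) ≤ 1 - 2 * δ := by linarith
    have hrexp : 1 - 2 * δ ≤ Real.exp (-(2 * δ)) := by
      have := Real.add_one_le_exp (-(2 * δ))
      linarith
    have hpowL : (1 - 2*δ) ^ L ≤ Real.exp (-(2*δ)) ^ L :=
      pow_le_pow_left₀ hr0 hrexp L
    have hexpL : Real.exp (-(2*δ)) ^ L = Real.exp (-(2 * t)) := by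
      rw [← Real.exp_nat_mul]
      congr 1
      rw [ht]; ring
    -- D^2 * δ ≤ exp t * Z^2
    have hLa : (L : ℝ) ^ a = Real.exp (a * Real.log L) := by
      rw [Real.rpow_def_of_pos hLpos]; ring_nf
    have hDbound : D ^ 2 * δ ≤ Real.exp t * Z ^ 2 := by
      have h1 : D ^ 2 * δ ^ 2 ≤ (1 + a) * Z ^ 2 * ((L:ℝ) ^ a * Real.log L) := by
        have := (div_le_iff₀ (by positivity : (0:ℝ) < (1 + a) * Z ^ 2)).mp hlen
        linarith
      -- (1+a) * log L = δ * L
      have h2 : D ^ 2 * δ ^ 2 ≤ Z ^ 2 * ((L:ℝ) ^ a) * (δ * L) := by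
        calc D ^ 2 * δ ^ 2 ≤ (1 + a) * Z ^ 2 * ((L:ℝ) ^ a * Real.log L) := h1
          _ = Z ^ 2 * ((L:ℝ) ^ a) * ((1 + a) * Real.log L) := by ring
          _ = Z ^ 2 * ((L:ℝ) ^ a) * (δ * L) := by rw [← hδL]
      have h3 : D ^ 2 * δ ≤ Z ^ 2 * ((L:ℝ) ^ a) * L := by
        have := mul_le_mul_of_nonneg_right h2 (le_of_lt (by positivity : (0:ℝ) < 1/δ))
        calc D ^ 2 * δ = D ^ 2 * δ ^ 2 * (1/δ) := by field_simp
          _ ≤ Z ^ 2 * ((L:ℝ) ^ a) * (δ * L) * (1/δ) := this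
          _ = Z ^ 2 * ((L:ℝ) ^ a) * L := by field_simp
      have h4 : ((L:ℝ) ^ a) * L = Real.exp t := by
        rw [hLa, ht, hδL]
        calc Real.exp (a * Real.log L) * L
            = Real.exp (a * Real.log L) * Real.exp (Real.log L) := by
              rw [Real.exp_log hLpos]
          _ = Real.exp ((1 + a) * Real.log L) := by
              rw [← Real.exp_add]; congr 1; ring
      calc D ^ 2 * δ ≤ Z ^ 2 * (((L:ℝ) ^ a) * L) := by linarith [h3]
        _ = Real.exp t * Z ^ 2 := by rw [h4]; ring
    -- exp(-t) ≤ 1/2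
    have hexpt : (2:ℝ) ≤ Real.exp t := by
      have h5 : Real.log 2 ≤ t := by
        rw [ht, hδL]
        have hlog2 : Real.log 2 ≤ Real.log L := Real.log_le_log (by norm_num) (by exact_mod_cast hL)
        nlinarith [hlog2, Real.log_pos (by norm_num : (1:ℝ) < 2)]
      calc (2:ℝ) = Real.exp (Real.log 2) := (Real.exp_log (by norm_num)).symm
        _ ≤ Real.exp t := Real.exp_le_exp.mpr h5
    -- combine: (1-2δ)^L * D^2 ≤ Z^2/(2δ)
    have hgeo : (1 - 2*δ) ^ L * D ^ 2 ≤ Z ^ 2 / (2 * δ) := by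
      have hDsq : (0:ℝ) ≤ D ^ 2 := sq_nonneg D
      have h6 : (1 - 2*δ) ^ L * D ^ 2 ≤ Real.exp (-(2*t)) * D ^ 2 := by
        apply mul_le_mul_of_nonneg_right _ hDsq
        rw [← hexpL]; exact hpowL
      have h7 : Real.exp (-(2*t)) * D ^ 2 * δ ≤ Real.exp (-(2*t)) * (Real.exp t * Z ^ 2) := by
        calc Real.exp (-(2*t)) * D ^ 2 * δ = Real.exp (-(2*t)) * (D ^ 2 * δ) := by ring
          _ ≤ Real.exp (-(2*t)) * (Real.exp t * Z ^ 2) :=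
              mul_le_mul_of_nonneg_left hDbound (le_of_lt (Real.exp_pos _))
      have h8 : Real.exp (-(2*t)) * (Real.exp t * Z ^ 2) = Real.exp (-t) * Z ^ 2 := by
        rw [← mul_assoc, ← Real.exp_add]
        congr 2
        ring
      have h9 : Real.exp (-t) ≤ 1/2 := by
        rw [Real.exp_neg]
        rw [inv_le_comm₀ (Real.exp_pos t) (by norm_num)]
        simpa using hexpt
      have h10 : Real.exp (-t) * Z ^ 2 ≤ Z ^ 2 / 2 := by
        have := mul_le_mul_of_nonneg_right h9 (sq_nonneg Z)
        linarith
      rw [le_div_iff₀ (by positivity : (0:ℝ) < 2 * δ)]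
      have h11 : (1 - 2*δ) ^ L * D ^ 2 * δ ≤ Real.exp (-(2*t)) * D ^ 2 * δ :=
        mul_le_mul_of_nonneg_right h6 (le_of_lt hδpos)
      rw [h8] at h7
      linarith [h11, h7, h10]
    have hhalfsum : Z ^ 2 / (2 * δ) + Z ^ 2 / (2 * δ) = Z ^ 2 / δ := by
      field_simp; ring
    linarith [hfinal, hgeo]
  · -- δ > 1/2 : one step suffices
    push_neg at hhalf
    have h1 : 1 ≤ L := le_trans (by norm_num) hL
    have hk := key L h1 le_rfl
    have hnn : (0:ℝ) ≤ ‖x (L-1) - y‖ ^ 2 := sq_nonneg _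
    have hneg : (1 - 2*δ) * ‖x (L-1) - y‖ ^ 2 ≤ 0 :=
      mul_nonpos_of_nonpos_of_nonneg (by linarith) hnn
    have hZδ : Z ^ 2 ≤ Z ^ 2 / δ := by
      rw [le_div_iff₀ hδpos]
      have := mul_le_mul_of_nonneg_left hδ1 (sq_nonneg Z)
      linarith
    linarith
end
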